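/- There is an absolute constant C > 0 with the following property. Let a : ℤ² → ℝ satisfy sup_k (1+|k|)^N |a_k| < ∞ for every N ∈ ℕ, and for j ∈ ℤ² set S_j := Σ_{l+m=j, l,m∈ℤ²∖{0,e,−e}} (l ∧ m)(1/|l| − 1/|m|) a_l a_m. Then |Σ_{k∈ℤ²₊} (k₁ + 1/2)(a_k S_{k+e} + a_{k+e} S_k)| ≤ C · (Σ_{l∈ℤ²∖{0,e,−e}} a_l²) · (Σ_{k∈ℤ²₊} |k| · |k₁ + 1/2| · |a_k|). -/

import Mathlib

open scoped BigOperators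

noncomputable section

/-- Euclidean norm of a lattice point `k ∈ ℤ²`. -/
def znorm (k : ℤ × ℤ) : ℝ := Real.sqrt ((k.1 : ℝ) ^ 2 + (k.2 : ℝ) ^ 2)

/-- Wedge product `l ∧ m = l₁ m₂ − l₂ m₁`. -/
def wedge (l m : ℤ × ℤ) : ℝ := ((l.1 * m.2 - l.2 * m.1 : ℤ) : ℝ)

/-- `S_j = Σ_{l+m=j, l,m ∉ {0,e,−e}} (l ∧ m)(1/|l| − 1/|m|) a_l a_m`,
parametrized by `l` (with `m = j − l`). -/
def Ssum (a : ℤ × ℤ → ℝ) (j : ℤ × ℤ) : ℝ :=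
  ∑' l : ℤ × ℤ,
    if l ≠ 0 ∧ l ≠ (1, 0) ∧ l ≠ (-1, 0) ∧
        j - l ≠ 0 ∧ j - l ≠ (1, 0) ∧ j - l ≠ (-1, 0) then
      wedge l (j - l) * (1 / znorm l - 1 / znorm (j - l)) * a l * a (j - l)
    else 0

/-! The coefficient of `a_l a_m` in `S_j` is at most `|j|` in absolute value: `|l ∧ m| ≤ |l| |m|`
and `|1/|l| − 1/|m|| = ||m| − |l|| / (|l| |m|)`, while `||m| − |l|| ≤ |l + m| = |j|`. With
`2 |a_l a_m| ≤ a_l² + a_m²` this gives `|S_j| ≤ |j| A`, where `A = Σ_{l ∉ {0, ±e}} a_l²`. Each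
summand of `σ` is then bounded by `A` times the weight `|k| |k₁ + 1/2| |a_k|` at `k` or at `k + e`,
and the shift by `e` changes that weight by at most a constant factor. -/

open ComplexConjugate

def toComplex (k : ℤ × ℤ) : ℂ := ⟨k.1, k.2⟩

@[simp]
lemma toComplex_re (k : ℤ × ℤ) : (toComplex k).re = k.1 := rfl

@[simp]
lemma toComplex_im (k : ℤ × ℤ) : (toComplex k).im = k.2 := rfl

@[simp]
lemma toComplex_add (k l : ℤ × ℤ) : toComplex (k + l) = toComplex k + toComplex l := by
  apply Complex.ext <;> simp

@[simp]
lemma toComplex_neg (k : ℤ × ℤ) : toComplex (-k) = -toComplex k := by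
  apply Complex.ext <;> simp

lemma znorm_eq_norm (k : ℤ × ℤ) : znorm k = ‖toComplex k‖ := by
  rw [znorm, Complex.norm_def, Complex.normSq_apply, toComplex_re, toComplex_im, sq, sq]

lemma wedge_eq_im (l m : ℤ × ℤ) : wedge l m = (conj (toComplex l) * toComplex m).im := by
  simp [wedge]
  ring

lemma znorm_nonneg (k : ℤ × ℤ) : 0 ≤ znorm k := Real.sqrt_nonneg _

lemma znorm_add_le (k l : ℤ × ℤ) : znorm (k + l) ≤ znorm k + znorm l := by
  simpa only [znorm_eq_norm, toComplex_add] using norm_add_le (toComplex k) (toComplex l)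

lemma znorm_neg (k : ℤ × ℤ) : znorm (-k) = znorm k := by
  rw [znorm_eq_norm, znorm_eq_norm, toComplex_neg, norm_neg]

lemma abs_znorm_sub_znorm_le (l m : ℤ × ℤ) : |znorm m - znorm l| ≤ znorm (l + m) := by
  simpa [znorm_eq_norm, add_comm] using abs_norm_sub_norm_le (toComplex m) (-toComplex l)

lemma abs_snd_le_znorm (k : ℤ × ℤ) : |(k.2 : ℝ)| ≤ znorm k := by
  simpa [znorm_eq_norm] using Complex.abs_im_le_norm (toComplex k)

lemma abs_fst_le_znorm (k : ℤ × ℤ) : |(k.1 : ℝ)| ≤ znorm k := by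
  simpa [znorm_eq_norm] using Complex.abs_re_le_norm (toComplex k)

lemma abs_fst_add_half_le (k : ℤ × ℤ) : |(k.1 : ℝ) + 1 / 2| ≤ 1 + znorm k := by
  linarith [abs_add_le (k.1 : ℝ) (1 / 2), abs_of_pos (one_half_pos : (0 : ℝ) < 1 / 2),
    abs_fst_le_znorm k]

lemma abs_wedge_le (l m : ℤ × ℤ) : |wedge l m| ≤ znorm l * znorm m := by
  simpa [wedge_eq_im, znorm_eq_norm] using
    Complex.abs_im_le_norm (conj (toComplex l) * toComplex m)

lemma abs_mul_one_div_sub_one_div_le {x a b : ℝ} (ha : 0 ≤ a) (hb : 0 ≤ b) (hx : |x| ≤ a * b) :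
    |x * (1 / a - 1 / b)| ≤ |b - a| := by
  rcases ha.eq_or_lt with rfl | ha
  · simp [abs_nonpos_iff.1 (by simpa using hx : |x| ≤ 0)]
  rcases hb.eq_or_lt with rfl | hb
  · simp [abs_nonpos_iff.1 (by simpa using hx : |x| ≤ 0)]
  have hab := mul_pos ha hb
  have h : x * (1 / a - 1 / b) = x / (a * b) * (b - a) := by
    field_simp
  rw [h, abs_mul, abs_div, abs_of_pos hab]
  exact mul_le_of_le_one_left (abs_nonneg _) ((div_le_one hab).2 hx)

lemma abs_wedge_mul_one_div_sub_one_div_le (l m : ℤ × ℤ) :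
    |wedge l m * (1 / znorm l - 1 / znorm m)| ≤ znorm (l + m) :=
  (abs_mul_one_div_sub_one_div_le (znorm_nonneg l) (znorm_nonneg m) (abs_wedge_le l m)).trans
    (abs_znorm_sub_znorm_le l m)

lemma znorm_add_le_two_mul {k d : ℤ × ℤ} (hk : 1 ≤ k.2) (hd : znorm d ≤ 1) :
    znorm (k + d) ≤ 2 * znorm k := by
  have h1 : (1 : ℝ) ≤ |(k.2 : ℝ)| := by
    rw [abs_of_pos (by exact_mod_cast hk)]
    exact_mod_cast hk
  linarith [znorm_add_le k d, abs_snd_le_znorm k]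

lemma znorm_one_zero : znorm (1, 0) = 1 := by
  simp [znorm]

lemma abs_add_half_le_three_mul (n : ℤ) : |(n : ℝ) + 1 / 2| ≤ 3 * |(n : ℝ) + 1 + 1 / 2| := by
  rcases le_or_gt (-1) n with hn | hn
  · have : (-1 : ℝ) ≤ n := by exact_mod_cast hn
    rw [abs_of_pos (show (0 : ℝ) < n + 1 + 1 / 2 by linarith), abs_le]
    constructor <;> linarith
  · have : (n : ℝ) ≤ -2 := by exact_mod_cast (by omega : n ≤ -2)
    rw [abs_of_neg (by linarith), abs_of_neg (by linarith)]
    linarith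

def restrictedSq (a : ℤ × ℤ → ℝ) (l : ℤ × ℤ) : ℝ :=
  if l ≠ 0 ∧ l ≠ (1, 0) ∧ l ≠ (-1, 0) then a l ^ 2 else 0

def upperWeight (a : ℤ × ℤ → ℝ) (k : ℤ × ℤ) : ℝ :=
  if 1 ≤ k.2 then znorm k * |(k.1 : ℝ) + 1 / 2| * |a k| else 0

def sigmaSummand (a : ℤ × ℤ → ℝ) (k : ℤ × ℤ) : ℝ :=
  if 1 ≤ k.2 then ((k.1 : ℝ) + 1 / 2) * (a k * Ssum a (k + (1, 0)) + a (k + (1, 0)) * Ssum a k)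
  else 0

def RapidDecay (a : ℤ × ℤ → ℝ) : Prop :=
  ∀ N : ℕ, ∃ M : ℝ, ∀ k : ℤ × ℤ, (1 + znorm k) ^ N * |a k| ≤ M

section

variable {a : ℤ × ℤ → ℝ}

lemma restrictedSq_nonneg (l : ℤ × ℤ) : 0 ≤ restrictedSq a l := by
  unfold restrictedSq
  split_ifs <;> positivity

lemma upperWeight_nonneg (k : ℤ × ℤ) : 0 ≤ upperWeight a k := by
  unfold upperWeight
  have := znorm_nonneg k
  split_ifs <;> positivity

lemma summable_restrictedSq (h : Summable fun l => a l ^ 2) : Summable (restrictedSq a) :=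
  h.of_nonneg_of_le restrictedSq_nonneg fun l => by
    unfold restrictedSq
    split_ifs
    exacts [le_rfl, sq_nonneg _]

lemma abs_Ssum_summand_le (a : ℤ × ℤ → ℝ) (j l : ℤ × ℤ) :
    |if l ≠ 0 ∧ l ≠ (1, 0) ∧ l ≠ (-1, 0) ∧
        j - l ≠ 0 ∧ j - l ≠ (1, 0) ∧ j - l ≠ (-1, 0) then
      wedge l (j - l) * (1 / znorm l - 1 / znorm (j - l)) * a l * a (j - l)
    else 0| ≤ znorm j / 2 * (restrictedSq a l + restrictedSq a (j - l)) := by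
  split_ifs with h
  · obtain ⟨hl₁, hl₂, hl₃, hm₁, hm₂, hm₃⟩ := h
    have hc := abs_wedge_mul_one_div_sub_one_div_le l (j - l)
    rw [add_sub_cancel] at hc
    have hprod : |a l * a (j - l)| ≤ (a l ^ 2 + a (j - l) ^ 2) / 2 := by
      rw [abs_le]
      constructor <;> nlinarith [sq_nonneg (a l - a (j - l)), sq_nonneg (a l + a (j - l))]
    rw [restrictedSq, restrictedSq, if_pos ⟨hl₁, hl₂, hl₃⟩, if_pos ⟨hm₁, hm₂, hm₃⟩, mul_assoc,
      abs_mul]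
    calc _ ≤ znorm j * ((a l ^ 2 + a (j - l) ^ 2) / 2) :=
          mul_le_mul hc hprod (abs_nonneg _) (znorm_nonneg j)
      _ = _ := by ring
  · rw [abs_zero]
    have := restrictedSq_nonneg (a := a) l
    have := restrictedSq_nonneg (a := a) (j - l)
    have := znorm_nonneg j
    positivity

lemma abs_Ssum_le (h : Summable fun l => a l ^ 2) (j : ℤ × ℤ) :
    |Ssum a j| ≤ znorm j * ∑' l, restrictedSq a l := by
  have hF := summable_restrictedSq h
  have hFj : Summable fun l => restrictedSq a (j - l) :=
    ((Equiv.subLeft j).summable_iff (f := restrictedSq a)).2 hF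
  have hsum := (hF.hasSum.add hFj.hasSum).mul_left (znorm j / 2)
  have hreflect : ∑' l, restrictedSq a (j - l) = ∑' l, restrictedSq a l :=
    (Equiv.subLeft j).tsum_eq (restrictedSq a)
  rw [hreflect] at hsum
  have hbound : ‖Ssum a j‖ ≤ _ := tsum_of_norm_bounded hsum (abs_Ssum_summand_le a j)
  rw [Real.norm_eq_abs] at hbound
  linarith

lemma abs_sigmaSummand_le (h : Summable fun l => a l ^ 2) (k : ℤ × ℤ) :
    |sigmaSummand a k| ≤
      (∑' l, restrictedSq a l) * (2 * upperWeight a k + 6 * upperWeight a (k + (1, 0))) := by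
  set A := ∑' l, restrictedSq a l
  have hA : 0 ≤ A := tsum_nonneg restrictedSq_nonneg
  by_cases hk : 1 ≤ k.2
  · have hk' : 1 ≤ (k + (1, 0)).2 := by simpa using hk
    have hke_le : znorm (k + (1, 0)) ≤ 2 * znorm k := znorm_add_le_two_mul hk znorm_one_zero.le
    have hk_le : znorm k ≤ 2 * znorm (k + (1, 0)) := by
      have := znorm_add_le_two_mul (d := -(1, 0)) hk' (by rw [znorm_neg, znorm_one_zero])
      rwa [add_neg_cancel_right] at this
    have hhalf : |(k.1 : ℝ) + 1 / 2| ≤ 3 * |((k + (1, 0)).1 : ℝ) + 1 / 2| := by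
      simpa using abs_add_half_le_three_mul k.1
    have hS₁ := abs_Ssum_le h (k + (1, 0))
    have hS₂ := abs_Ssum_le h k
    rw [sigmaSummand, upperWeight, upperWeight, if_pos hk, if_pos hk, if_pos hk']
    have := znorm_nonneg k
    have := znorm_nonneg (k + (1, 0))
    calc _ ≤ |(k.1 : ℝ) + 1 / 2| *
            (|a k| * |Ssum a (k + (1, 0))| + |a (k + (1, 0))| * |Ssum a k|) := by
          rw [abs_mul, ← abs_mul (a k), ← abs_mul (a (k + (1, 0)))]
          gcongr
          exact abs_add_le _ _
      _ ≤ |(k.1 : ℝ) + 1 / 2| *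
            (|a k| * (znorm (k + (1, 0)) * A) + |a (k + (1, 0))| * (znorm k * A)) := by
          gcongr
      _ = A * (|(k.1 : ℝ) + 1 / 2| * |a k| * znorm (k + (1, 0))
            + |(k.1 : ℝ) + 1 / 2| * |a (k + (1, 0))| * znorm k) := by ring
      _ ≤ A * (|(k.1 : ℝ) + 1 / 2| * |a k| * (2 * znorm k)
            + 3 * |((k + (1, 0)).1 : ℝ) + 1 / 2| * |a (k + (1, 0))|
              * (2 * znorm (k + (1, 0)))) := by
          gcongr
      _ = _ := by ring
  · rw [sigmaSummand, if_neg hk, abs_zero]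
    have := upperWeight_nonneg (a := a) k
    have := upperWeight_nonneg (a := a) (k + (1, 0))
    positivity

lemma summable_inv_one_add_abs_sq : Summable fun n : ℤ => ((1 + |(n : ℝ)|) ^ 2)⁻¹ := by
  have h : Summable fun n : ℕ => ((1 + (n : ℝ)) ^ 2)⁻¹ := by
    simpa [add_comm] using (summable_nat_add_iff 1).2 (Real.summable_nat_pow_inv.2 one_lt_two)
  rw [summable_int_iff_summable_nat_and_neg]
  exact ⟨by simpa using h, by simpa using h⟩

lemma summable_inv_one_add_znorm_pow_four :
    Summable fun k : ℤ × ℤ => ((1 + znorm k) ^ 4)⁻¹ := by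
  refine (summable_inv_one_add_abs_sq.mul_of_nonneg summable_inv_one_add_abs_sq
    (fun _ => by positivity) (fun _ => by positivity)).of_nonneg_of_le
    (fun k => by have := znorm_nonneg k; positivity) fun k => ?_
  rw [← mul_inv, show (1 + znorm k) ^ 4 = (1 + znorm k) ^ 2 * (1 + znorm k) ^ 2 by ring]
  gcongr
  exacts [abs_fst_le_znorm k, abs_snd_le_znorm k]

lemma RapidDecay.summable_one_add_znorm_pow_mul (ha : RapidDecay a) (n : ℕ) :
    Summable fun k => (1 + znorm k) ^ n * |a k| := by
  obtain ⟨M, hM⟩ := ha (n + 4)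
  refine (summable_inv_one_add_znorm_pow_four.mul_left M).of_nonneg_of_le
    (fun k => by have := znorm_nonneg k; positivity) fun k => ?_
  have := znorm_nonneg k
  rw [← div_eq_mul_inv, le_div_iff₀ (by positivity), mul_right_comm, ← pow_add]
  exact hM k

lemma RapidDecay.summable_sq (ha : RapidDecay a) : Summable fun l => a l ^ 2 := by
  obtain ⟨M, hM⟩ := ha 0
  refine ((ha.summable_one_add_znorm_pow_mul 0).mul_left M).of_nonneg_of_le
    (fun l => sq_nonneg _) fun l => ?_
  have hl : |a l| ≤ M := by simpa using hM l
  rw [pow_zero, one_mul, ← sq_abs, sq]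
  exact mul_le_mul_of_nonneg_right hl (abs_nonneg _)

lemma RapidDecay.summable_upperWeight (ha : RapidDecay a) : Summable (upperWeight a) :=
  (ha.summable_one_add_znorm_pow_mul 2).of_nonneg_of_le upperWeight_nonneg fun k => by
    have := znorm_nonneg k
    unfold upperWeight
    split_ifs
    · rw [sq]
      gcongr
      · linarith
      · exact abs_fst_add_half_le k
    · positivity

lemma RapidDecay.abs_tsum_sigmaSummand_le (ha : RapidDecay a) :
    |∑' k, sigmaSummand a k| ≤ 8 * (∑' l, restrictedSq a l) * ∑' k, upperWeight a k := by
  have hW := ha.summable_upperWeight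
  have hWe : Summable fun k => upperWeight a (k + (1, 0)) :=
    ((Equiv.addRight (1, 0)).summable_iff (f := upperWeight a)).2 hW
  have hsum :=
    ((hW.hasSum.mul_left 2).add (hWe.hasSum.mul_left 6)).mul_left (∑' l, restrictedSq a l)
  have hshift : ∑' k, upperWeight a (k + (1, 0)) = ∑' k, upperWeight a k :=
    (Equiv.addRight (1, 0)).tsum_eq (upperWeight a)
  rw [hshift] at hsum
  have hbound : ‖∑' k, sigmaSummand a k‖ ≤ _ :=
    tsum_of_norm_bounded hsum (abs_sigmaSummand_le ha.summable_sq)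
  rw [Real.norm_eq_abs] at hbound
  linarith

end

/-- Bound on the error term `σ`:
`|Σ_{k∈ℤ²₊} (k₁+1/2)(a_k S_{k+e} + a_{k+e} S_k)| ≤ C (Σ_{l∉{0,±e}} a_l²) (Σ_{k∈ℤ²₊} |k||k₁+1/2||a_k|)`. -/
theorem sigma_term_bound :
    ∃ C : ℝ, 0 < C ∧
      ∀ a : ℤ × ℤ → ℝ,
        (∀ N : ℕ, ∃ M : ℝ, ∀ k : ℤ × ℤ, (1 + znorm k) ^ N * |a k| ≤ M) →
        |∑' k : ℤ × ℤ,
            if 1 ≤ k.2 then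
              ((k.1 : ℝ) + 1 / 2) *
                (a k * Ssum a (k + (1, 0)) + a (k + (1, 0)) * Ssum a k)
            else 0| ≤
          C * (∑' l : ℤ × ℤ, if l ≠ 0 ∧ l ≠ (1, 0) ∧ l ≠ (-1, 0) then a l ^ 2 else 0) *
            ∑' k : ℤ × ℤ,
              if 1 ≤ k.2 then znorm k * |(k.1 : ℝ) + 1 / 2| * |a k| else 0 :=
  ⟨8, by norm_num, fun _ ha => RapidDecay.abs_tsum_sigmaSummand_le ha⟩
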